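/- The element δ³ generates the center of B₃: in the band presentation of B₃, the center of the group equals the cyclic subgroup generated by δ³ (equivalently, in the classical presentation, the center of B₃ equals the cyclic subgroup generated by (σ₂σ₁)³). -/

import Mathlib

/-!
Let `x = σ₁σ₂σ₁ = a₁δ` and `y = σ₁σ₂ = a₁a₂`. Then `x² = y³ = δ³`, and `δ³` is central because
conjugation by `δ` permutes the band generators cyclically. Conversely, `a₁ ↦ y⁻¹x`, `a₂ ↦ x⁻¹y²`
defines a surjection of `B₃` onto the free product `C₂ ∗ C₃ = ⟨x⟩ ∗ ⟨y⟩` (the modular group),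
and `x ↦ x, y ↦ y` defines a map back to `B₃ ⧸ ⟨δ³⟩` whose composite with it is the quotient
map. So the kernel of the surjection lies in `⟨δ³⟩`, and since a free product of two nontrivial
groups has trivial center, every central element of `B₃` lies in that kernel.
-/

/-- The band relations `a₂a₁ = a₃a₂ = a₁a₃`, with subscripts taken modulo 3
(the generator `a₃` is indexed by `0 : ZMod 3`). -/
def bandRels : Set (FreeGroup (ZMod 3)) :=
  { FreeGroup.of 2 * FreeGroup.of 1 * (FreeGroup.of 0 * FreeGroup.of 2)⁻¹,
    FreeGroup.of 0 * FreeGroup.of 2 * (FreeGroup.of 1 * FreeGroup.of 0)⁻¹ }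

/-- The band-presented group `⟨a₁, a₂, a₃ | a₂a₁ = a₃a₂ = a₁a₃⟩` (a model of `B₃`). -/
abbrev BandB3 := PresentedGroup bandRels

/-- The band generators `a i`, indexed by `ZMod 3` (so `a 0 = a₃`). -/
def a (i : ZMod 3) : BandB3 := PresentedGroup.of i

/-- The fundamental element `δ = a₂a₁ (= a₃a₂ = a₁a₃)`, corresponding to `σ₂σ₁`
in the classical presentation. -/
def δ : BandB3 := a 2 * a 1

open Monoid

theorem Subgroup.normal_of_le_center {G : Type*} [Group G] {N : Subgroup G}
    (h : N ≤ Subgroup.center G) : N.Normal :=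
  ⟨fun n hn g => by rwa [(Subgroup.mem_center_iff.mp (h hn) g), mul_inv_cancel_right]⟩

theorem Subgroup.map_center_le_center_of_surjective {G H : Type*} [Group G] [Group H]
    {f : G →* H} (hf : Function.Surjective f) : (Subgroup.center G).map f ≤ Subgroup.center H := by
  rintro _ ⟨z, hz, rfl⟩
  refine Subgroup.mem_center_iff.mpr fun h => ?_
  obtain ⟨g, rfl⟩ := hf h
  rw [← map_mul, Subgroup.mem_center_iff.mp hz, map_mul]

theorem Multiplicative.ofAdd_one_pow_self (n : ℕ) : ofAdd (1 : ZMod n) ^ n = 1 := by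
  rw [← ofAdd_nsmul, nsmul_one, ZMod.natCast_self, ofAdd_zero]

theorem Multiplicative.mem_zpowers_ofAdd_one {n : ℕ} (m : Multiplicative (ZMod n)) :
    m ∈ Subgroup.zpowers (ofAdd 1) := by
  obtain ⟨k, hk⟩ := ZMod.intCast_surjective m.toAdd
  exact ⟨k, show ofAdd 1 ^ k = m by rw [← ofAdd_zsmul, zsmul_one, hk]; rfl⟩

def ZMod.liftOfPowEqOne {n : ℕ} {G : Type*} [Group G] (g : G) (hg : g ^ n = 1) :
    Multiplicative (ZMod n) →* G :=
  AddMonoidHom.toMultiplicativeLeft <| ZMod.lift n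
    ⟨zmultiplesHom (Additive G) (Additive.ofMul g), by simp [← ofMul_pow, hg]⟩

theorem ZMod.liftOfPowEqOne_ofAdd_one {n : ℕ} {G : Type*} [Group G] (g : G) (hg : g ^ n = 1) :
    ZMod.liftOfPowEqOne g hg (Multiplicative.ofAdd 1) = g := by
  simp only [ZMod.liftOfPowEqOne, AddMonoidHom.toMultiplicativeLeft_apply_apply, toAdd_ofAdd]
  rw [← Int.cast_one (R := ZMod n), ZMod.lift_coe]
  simp

namespace Monoid.CoprodI

variable {ι : Type*} {G : ι → Type*} [∀ i, Group (G i)]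

theorem Word.length_of_smul_le [DecidableEq ι] [∀ i, DecidableEq (G i)] {w : Word G} {k : ι}
    (hk : w.fstIdx = some k) (c : G k) : (of c • w).toList.length ≤ w.toList.length := by
  induction w using Word.consRecOn with
  | empty => cases hk
  | cons i m w' h1 h2 _ =>
    obtain rfl : i = k := by simpa [Word.fstIdx, Word.cons] using hk
    have hlen : (Word.cons m w' h1 h2).toList.length = w'.toList.length + 1 := by
      simp [Word.cons]
    rw [hlen, Word.cons_eq_smul, smul_smul, ← map_mul, Word.of_smul_def,
      Word.equivPair_eq_of_fstIdx_ne h1]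
    simp only [Word.rcons]
    split_ifs <;> simp [Word.cons]

theorem NeWord.fstIdx_toWord {i j : ι} (w : NeWord G i j) : w.toWord.fstIdx = some i := by
  simp [Word.fstIdx, NeWord.toWord]

theorem center_eq_bot (h : ∀ i, ∃ j ≠ i, Nontrivial (G j)) :
    Subgroup.center (CoprodI G) = ⊥ := by
  classical
  refine (Subgroup.eq_bot_iff_forall _).2 fun p hp => by_contra fun hp1 => ?_
  obtain ⟨i, j, w, hw⟩ := NeWord.of_word (Word.equiv p) fun h => hp1 <| by
    rw [← Word.equiv.symm_apply_apply p, h]; exact Word.prod_empty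
  replace hp : w.prod ∈ Subgroup.center (CoprodI G) := by
    have hwp : w.prod = p := by rw [NeWord.prod, hw]; exact Word.equiv.symm_apply_apply p
    rwa [hwp]
  obtain ⟨k, hkj, hk⟩ := h j
  obtain ⟨c, hc⟩ := exists_ne (1 : G k)
  -- `p * c` has the reduced word `w ++ [c]`, which starts in `G i`; but `c * p` either starts
  -- with `c` (if `k ≠ i`) or is no longer than `w` (if `k = i`).
  set v := w.append hkj.symm (NeWord.singleton c hc)
  have hv : v.toWord = of c • w.toWord := by
    apply Word.equiv.symm.injective
    change v.prod = Word.prod _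
    rw [Word.prod_smul, NeWord.append_prod, NeWord.prod_singleton]
    exact (Subgroup.mem_center_iff.mp hp _).symm
  by_cases hik : i = k
  · subst hik
    have := Word.length_of_smul_le w.fstIdx_toWord c
    rw [← hv] at this
    simp [v, NeWord.toWord] at this
  · have hfst := v.fstIdx_toWord
    rw [hv, ← Word.cons_eq_smul (h2 := hc) (h1 := by simpa [w.fstIdx_toWord] using hik),
      Word.fstIdx_cons] at hfst
    exact hik (Option.some_injective _ hfst).symm

end Monoid.CoprodI

theorem a_two_mul_a_one : a 2 * a 1 = a 0 * a 2 := by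
  have h := PresentedGroup.one_of_mem (rels := bandRels) (Set.mem_insert _ _)
  rwa [map_mul, map_mul, map_inv, map_mul, mul_inv_eq_one] at h

theorem a_zero_mul_a_two : a 0 * a 2 = a 1 * a 0 := by
  have h := PresentedGroup.one_of_mem (rels := bandRels) (Set.mem_insert_of_mem _ rfl)
  rwa [map_mul, map_mul, map_inv, map_mul, mul_inv_eq_one] at h

theorem δ_eq_a_zero_mul_a_two : δ = a 0 * a 2 := a_two_mul_a_one

theorem δ_eq_a_one_mul_a_zero : δ = a 1 * a 0 := a_two_mul_a_one.trans a_zero_mul_a_two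

theorem a_zero_eq : a 0 = (a 1)⁻¹ * a 2 * a 1 := by
  rw [mul_assoc, ← δ, δ_eq_a_one_mul_a_zero, inv_mul_cancel_left]

theorem δ_mul_a (i : ZMod 3) : δ * a i = a (i - 1) * δ := by
  fin_cases i
  · show δ * a 0 = a 2 * δ
    conv_lhs => rw [δ, mul_assoc, ← δ_eq_a_one_mul_a_zero]
  · show δ * a 1 = a 0 * δ
    conv_lhs => rw [δ_eq_a_zero_mul_a_two, mul_assoc, ← δ]
  · show δ * a 2 = a 1 * δ
    conv_lhs => rw [δ_eq_a_one_mul_a_zero, mul_assoc, ← δ_eq_a_zero_mul_a_two]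

theorem δ_mul_a_one : δ * a 1 = a 0 * δ := δ_mul_a 1

theorem δ_mul_a_two : δ * a 2 = a 1 * δ := δ_mul_a 2

theorem δ_pow_mul_a (n : ℕ) (i : ZMod 3) : δ ^ n * a i = a (i - n) * δ ^ n := by
  induction n generalizing i with
  | zero => simp
  | succ n ih =>
    rw [pow_succ, mul_assoc, δ_mul_a, ← mul_assoc, ih, mul_assoc, ← pow_succ, Nat.cast_succ,
      sub_sub, add_comm (1 : ZMod 3)]

theorem δ_pow_three_mem_center : δ ^ 3 ∈ Subgroup.center BandB3 := by
  have hcomm (i : ZMod 3) : δ ^ 3 * a i = a i * δ ^ 3 := by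
    rw [δ_pow_mul_a, ZMod.natCast_self, sub_zero]
  refine Subgroup.mem_center_iff.mpr fun g => ?_
  have : g ∈ Subgroup.centralizer {δ ^ 3} := PresentedGroup.generated_by _ _ (fun i =>
    Subgroup.mem_centralizer_singleton_iff.mpr (hcomm i).symm) g
  exact Subgroup.mem_centralizer_singleton_iff.mp this

theorem a_one_mul_δ_sq : (a 1 * δ) ^ 2 = δ ^ 3 :=
  calc (a 1 * δ) ^ 2 = a 1 * (δ * a 1) * δ := by rw [sq]; group
    _ = δ ^ 3 := by rw [δ_mul_a_one, ← mul_assoc, ← δ_eq_a_one_mul_a_zero, pow_three']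

theorem a_one_mul_a_two_cube : (a 1 * a 2) ^ 3 = δ ^ 3 :=
  calc (a 1 * a 2) ^ 3 = a 1 * δ * (δ * a 2) := by rw [δ, pow_three']; simp only [mul_assoc]
    _ = δ ^ 3 := by rw [δ_mul_a_two, ← a_one_mul_δ_sq, sq]

instance : (Subgroup.zpowers (δ ^ 3)).Normal :=
  Subgroup.normal_of_le_center (Subgroup.zpowers_le.mpr δ_pow_three_mem_center)

section Lift

variable {H : Type*} [Group H] {A B : H}

/-- With `a₀ ↦ A⁻¹BA`, both band relations become the braid relation `ABA = BAB`. -/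
def bandLift (h : A * B * A = B * A * B) : BandB3 →* H :=
  PresentedGroup.toGroup (f := fun i => if i = 0 then A⁻¹ * B * A else if i = 1 then A else B) <| by
    have key : B * A = A⁻¹ * B * A * B :=
      calc B * A = A⁻¹ * (A * B * A) := by group
        _ = A⁻¹ * B * A * B := by rw [h]; group
    rintro r (rfl | rfl) <;>
      simp +decide only [map_mul, map_inv, FreeGroup.lift_apply_of, mul_inv_eq_one, if_true,
        if_false]
    · exact key
    · exact key.symm.trans (by group)

theorem bandLift_a_one (h : A * B * A = B * A * B) : bandLift h (a 1) = A :=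
  (PresentedGroup.toGroup.of _).trans (by simp +decide)

theorem bandLift_a_two (h : A * B * A = B * A * B) : bandLift h (a 2) = B :=
  (PresentedGroup.toGroup.of _).trans (by simp +decide)

end Lift

abbrev C₂C₃ : Type := CoprodI fun b : Bool => Multiplicative (ZMod (cond b 3 2))

namespace C₂C₃

def gen (b : Bool) : C₂C₃ := CoprodI.of (i := b) (Multiplicative.ofAdd 1)

theorem gen_pow (b : Bool) : gen b ^ cond b 3 2 = 1 := by
  rw [gen, ← map_pow, Multiplicative.ofAdd_one_pow_self, map_one]

theorem center_eq_bot : Subgroup.center C₂C₃ = ⊥ :=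
  CoprodI.center_eq_bot fun b =>
    ⟨!b, by cases b <;> decide, by cases b <;> exact ⟨⟨.ofAdd 1, 1, by decide⟩⟩⟩

theorem gen_false_inv : (gen false)⁻¹ = gen false :=
  inv_eq_of_mul_eq_one_right (by rw [← pow_two]; exact gen_pow false)

theorem braid_rel :
    (gen true)⁻¹ * gen false * ((gen false)⁻¹ * gen true ^ 2) * ((gen true)⁻¹ * gen false) =
      (gen false)⁻¹ * gen true ^ 2 * ((gen true)⁻¹ * gen false) * ((gen false)⁻¹ * gen true ^ 2) :=
  have hy : gen true ^ 3 = 1 := gen_pow true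
  calc _ = gen false := by group
    _ = (gen false)⁻¹ * gen true ^ 3 := by rw [gen_false_inv, hy, mul_one]
    _ = _ := by group

def ofBand : BandB3 →* C₂C₃ := bandLift braid_rel

theorem ofBand_a_one_mul_δ : ofBand (a 1 * δ) = gen false := by
  rw [δ, ← mul_assoc, map_mul, map_mul, ofBand, bandLift_a_one, bandLift_a_two]; group

theorem ofBand_a_one_mul_a_two : ofBand (a 1 * a 2) = gen true := by
  rw [map_mul, ofBand, bandLift_a_one, bandLift_a_two]; group

theorem ofBand_surjective : Function.Surjective ofBand := by
  have hgen (b : Bool) : gen b ∈ ofBand.range := by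
    cases b
    · exact ⟨_, ofBand_a_one_mul_δ⟩
    · exact ⟨_, ofBand_a_one_mul_a_two⟩
  rw [← MonoidHom.range_eq_top, eq_top_iff]
  rintro p -
  induction p using CoprodI.induction_on with
  | one => exact one_mem _
  | of b m =>
    obtain ⟨k, rfl⟩ := Multiplicative.mem_zpowers_ofAdd_one m
    rw [map_zpow]
    exact zpow_mem (hgen _) k
  | mul p q hp hq => exact mul_mem hp hq

def genImage (b : Bool) : BandB3 ⧸ Subgroup.zpowers (δ ^ 3) :=
  QuotientGroup.mk (cond b (a 1 * a 2) (a 1 * δ))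

theorem genImage_pow (b : Bool) : genImage b ^ cond b 3 2 = 1 := by
  rw [genImage, ← QuotientGroup.mk_pow, QuotientGroup.eq_one_iff]
  cases b
  · exact a_one_mul_δ_sq ▸ Subgroup.mem_zpowers _
  · exact a_one_mul_a_two_cube ▸ Subgroup.mem_zpowers _

def toBandQuot : C₂C₃ →* BandB3 ⧸ Subgroup.zpowers (δ ^ 3) :=
  CoprodI.lift fun b => ZMod.liftOfPowEqOne (genImage b) (genImage_pow b)

theorem toBandQuot_gen (b : Bool) : toBandQuot (gen b) = genImage b := by
  rw [toBandQuot, gen, CoprodI.lift_of, ZMod.liftOfPowEqOne_ofAdd_one]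

theorem toBandQuot_comp_ofBand :
    toBandQuot.comp ofBand = QuotientGroup.mk' (Subgroup.zpowers (δ ^ 3)) := by
  have h1 : toBandQuot (ofBand (a 1)) = QuotientGroup.mk (a 1) := by
    rw [ofBand, bandLift_a_one, map_mul, map_inv, toBandQuot_gen, toBandQuot_gen, genImage,
      genImage, cond_true, cond_false, ← QuotientGroup.mk_inv, ← QuotientGroup.mk_mul]
    congr 1; rw [δ]; group
  have h2 : toBandQuot (ofBand (a 2)) = QuotientGroup.mk (a 2) := by
    rw [ofBand, bandLift_a_two, map_mul, map_inv, map_pow, toBandQuot_gen, toBandQuot_gen, genImage,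
      genImage, cond_true, cond_false, ← QuotientGroup.mk_inv, ← QuotientGroup.mk_pow,
      ← QuotientGroup.mk_mul]
    congr 1; rw [δ, sq]; group
  refine PresentedGroup.ext fun i => ?_
  fin_cases i
  · show toBandQuot (ofBand (a 0)) = QuotientGroup.mk (a 0)
    simp only [a_zero_eq, map_mul, map_inv, h1, h2, QuotientGroup.mk_mul, QuotientGroup.mk_inv]
  · exact h1
  · exact h2

theorem ker_ofBand_le : ofBand.ker ≤ Subgroup.zpowers (δ ^ 3) := fun z hz => by
  rw [← QuotientGroup.eq_one_iff, ← QuotientGroup.mk'_apply, ← toBandQuot_comp_ofBand,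
    MonoidHom.comp_apply, hz, map_one]

end C₂C₃

/-- `δ³` generates the center of `B₃`: the center of the band-presented group
equals the cyclic subgroup generated by `δ³`. -/
theorem center_eq_zpowers_delta_cubed :
    Subgroup.center BandB3 = Subgroup.zpowers (δ ^ 3) := by
  refine le_antisymm (fun z hz => C₂C₃.ker_ofBand_le ?_)
    (Subgroup.zpowers_le.mpr δ_pow_three_mem_center)
  have : C₂C₃.ofBand z ∈ Subgroup.center C₂C₃ :=
    Subgroup.map_center_le_center_of_surjective C₂C₃.ofBand_surjective ⟨z, hz, rfl⟩
  rwa [C₂C₃.center_eq_bot, Subgroup.mem_bot] at this
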